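/- Key identity for the cup-i construction (homotopy relation): for any simplicial complex X, integer i, and n-simplex x, ∂(Δ_i(x)) + Δ_i(∂x) = (1+T)Δ_{i-1}(x) in C_•(X;𝔽₂)⊗C_•(X;𝔽₂), where T is the transposition of tensor factors. -/

import Mathlib

open scoped TensorProduct

def posIn (S : Finset ℕ) (u : ℕ) : ℕ := (S.filter (fun v => v ≤ u)).card
def idxFun (U : Finset ℕ) (u : ℕ) : ℕ := (u + posIn U u) % 2
def part0 (U : Finset ℕ) : Finset ℕ := U.filter (fun u => idxFun U u = 0)
def part1 (U : Finset ℕ) : Finset ℕ := U.filter (fun u => idxFun U u = 1)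

variable {V : Type} [LinearOrder V]

/-- `dFace U x` deletes from the simplex `x` the vertices in (0-based) positions `U`. -/
def dFace (U : Finset ℕ) (x : Finset V) : Finset V :=
  ((((x.sort (· ≤ ·)).zipIdx.map Prod.swap).filter (fun p => decide (p.1 ∉ U))).map Prod.snd).toFinset

/-- Mod 2 simplicial chains: the free `𝔽₂`-module on simplices (finite subsets of `V`). -/
abbrev Chains (V : Type) [LinearOrder V] := Finset V →₀ ZMod 2

noncomputable instance {V : Type} [LinearOrder V] :
    Zero (TensorProduct (ZMod 2) (Chains V) (Chains V)) :=
  (inferInstance : AddCommMonoid (TensorProduct (ZMod 2) (Chains V) (Chains V))).toAddMonoid.toZero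

/-- Basis chain corresponding to a simplex. -/
noncomputable def eC (x : Finset V) : Chains V := Finsupp.single x 1

/-- The cup-`i` coproduct on a basis simplex. -/
noncomputable def deltaSimplex (i : ℤ) (x : Finset V) :
    TensorProduct (ZMod 2) (Chains V) (Chains V) :=
  if 0 ≤ i ∧ i ≤ (x.card : ℤ) - 1 then
    ∑ U ∈ Finset.powersetCard (x.card - 1 - i.toNat) (Finset.range x.card),
      eC (dFace (part0 U) x) ⊗ₜ[ZMod 2] eC (dFace (part1 U) x)
  else (0 : TensorProduct (ZMod 2) (Chains V) (Chains V))

/-- The cup-`i` coproduct `Δᵢ`, as a linear map on chains. -/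
noncomputable def deltaMap (V : Type) [LinearOrder V] (i : ℤ) :
    Chains V →ₗ[ZMod 2] TensorProduct (ZMod 2) (Chains V) (Chains V) :=
  Finsupp.lift _ (ZMod 2) (Finset V) (deltaSimplex i)

/-- Mod 2 boundary of a basis simplex. -/
noncomputable def bdSimplex (x : Finset V) : Chains V :=
  if 2 ≤ x.card then ∑ i ∈ Finset.range x.card, eC (dFace {i} x) else 0

/-- Mod 2 simplicial boundary `∂ = Σ dᵢ`. -/
noncomputable def bdMap (V : Type) [LinearOrder V] : Chains V →ₗ[ZMod 2] Chains V :=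
  Finsupp.lift _ (ZMod 2) (Finset V) bdSimplex

/-- Boundary on the tensor product: `∂(a⊗b) = ∂a⊗b + a⊗∂b` (signs trivial mod 2). -/
noncomputable def bdT (V : Type) [LinearOrder V] :
    TensorProduct (ZMod 2) (Chains V) (Chains V) →ₗ[ZMod 2]
      TensorProduct (ZMod 2) (Chains V) (Chains V) :=
  TensorProduct.map (bdMap V) LinearMap.id + TensorProduct.map LinearMap.id (bdMap V)

/-- Transposition of tensor factors `T(a⊗b) = b⊗a`. -/
noncomputable def transp (V : Type) [LinearOrder V] :
    TensorProduct (ZMod 2) (Chains V) (Chains V) →ₗ[ZMod 2]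
      TensorProduct (ZMod 2) (Chains V) (Chains V) :=
  (TensorProduct.comm (ZMod 2) (Chains V) (Chains V)).toLinearMap

/-- Chain map induced by a simplicial (monotone) map `f`. -/
noncomputable def fChain {W : Type} [LinearOrder W] (f : V → W) :
    Chains V →ₗ[ZMod 2] Chains W :=
  Finsupp.lift _ (ZMod 2) (Finset V)
    (fun x => if (x.image f).card = x.card then eC (x.image f) else 0)

/-- Evaluation of a cochain on chains. -/
noncomputable def evalCochain (α : Finset V → ZMod 2) : Chains V →ₗ[ZMod 2] ZMod 2 :=
  Finsupp.lift _ (ZMod 2) (Finset V) α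

/-- Evaluation of a tensor of cochains on a tensor of chains. -/
noncomputable def pairing (α β : Finset V → ZMod 2) :
    TensorProduct (ZMod 2) (Chains V) (Chains V) →ₗ[ZMod 2] ZMod 2 :=
  (LinearMap.mul' (ZMod 2) (ZMod 2)) ∘ₗ TensorProduct.map (evalCochain α) (evalCochain β)

/-- Indicator cochain of a single simplex. -/
def indC (a : Finset V) : Finset V → ZMod 2 := fun y => if y = a then 1 else 0

/-!
Write `n = #x` and `τ(A, B) = d_A x ⊗ d_B x`, so that `Δᵢ x = Σ_{|U| = c} τ(U⁰, U¹)` with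
`c = n - 1 - i`. The boundary `∂ τ(U⁰, U¹)` inserts one more position `r` into `U⁰` or into `U¹`,
while `Δᵢ(∂x)`, once faces of faces are written as faces of `x`, is
`Σ_U Σ_{k ∈ U} τ(U⁰ ∪ k, U¹ ∪ k)`. Mod 2 this cancels the terms of `∂ τ` with `r ∈ U`, leaving a
sum over `v ∉ U`; grouped by `W = U ∪ {v}` it is
`Σ_{v ∈ W} (τ(v ∪ (W∖v)⁰, (W∖v)¹) + τ((W∖v)⁰, v ∪ (W∖v)¹))`, whose terms have the form
`τ(S, W∖S)`. Erasing `v` flips the parity of the later elements of `W`, so the two sets `S`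
occurring for `v` are consecutive members of a chain of subsets of `W` running from `W¹` to `W⁰`,
and the sum telescopes to `τ(W¹, W⁰) + τ(W⁰, W¹)`. Summing over
`|W| = c + 1` gives `(1 + T) Δ_{i-1} x`. Since the boundary of a vertex is `0` and not the empty
simplex, `∂` also produces a correction term; it is nonzero only for `i = 0`, where it cancels the
telescoped sum, in accordance with `Δ_{-1} = 0`.
-/

open Finset

section Positions

variable {α : Type*} [LinearOrder α] {s t : Finset α} {a : α}

def vertexPos (s : Finset α) (a : α) : ℕ := #(s.filter (· < a))

lemma vertexPos_strictMonoOn : StrictMonoOn (vertexPos s) s := by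
  intro a ha b _ hab
  refine card_lt_card ((ssubset_iff_of_subset fun c hc => ?_).2 ⟨a, ?_, ?_⟩)
  · simp only [mem_filter] at hc ⊢
    exact ⟨hc.1, hc.2.trans hab⟩
  · exact mem_filter.2 ⟨ha, hab⟩
  · simp

lemma vertexPos_lt_card (ha : a ∈ s) : vertexPos s a < #s :=
  card_lt_card (filter_ssubset.2 ⟨a, ha, lt_irrefl a⟩)

lemma image_vertexPos (s : Finset α) : s.image (vertexPos s) = range #s :=
  eq_of_subset_of_card_le (image_subset_iff.2 fun _ ha => mem_range.2 (vertexPos_lt_card ha))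
    (by rw [card_range, card_image_of_injOn vertexPos_strictMonoOn.injOn])

lemma vertexPos_of_subset (ht : t ⊆ s) (ha : a ∈ s) :
    vertexPos t a = vertexPos (t.image (vertexPos s)) (vertexPos s a) := by
  have hinj := vertexPos_strictMonoOn.injOn.mono (coe_subset.2 ht)
  rw [vertexPos, vertexPos, filter_image, card_image_of_injOn (hinj.mono (filter_subset _ _))]
  congr 1
  exact filter_congr fun b hb =>
    (vertexPos_strictMonoOn.lt_iff_lt (ht hb) ha).symm

end Positions

section Faces

variable {x : Finset V} {A : Finset ℕ}

lemma zipIdx_filter_map_snd (l : List V) (hl : l.Pairwise (· < ·)) (n : ℕ) (q : ℕ → Bool) :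
    (((l.zipIdx n).map Prod.swap).filter (fun p => q p.1)).map Prod.snd
      = l.filter (fun v => q (n + l.countP (· < v))) := by
  induction l generalizing n with
  | nil => simp
  | cons a l ih =>
    rw [List.pairwise_cons] at hl
    have hcount : ∀ v ∈ l, (a :: l).countP (· < v) = l.countP (· < v) + 1 := fun v hv => by
      simp [hl.1 v hv]
    have ha : (a :: l).countP (· < a) = 0 :=
      List.countP_eq_zero.2 fun w hw => by
        rcases List.mem_cons.1 hw with rfl | hw
        · simp
        · simpa using (hl.1 w hw).le
    have htail : l.filter (fun v => q (n + (a :: l).countP (· < v)))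
        = l.filter (fun v => q (n + 1 + l.countP (· < v))) :=
      List.filter_congr fun v hv => by rw [hcount v hv, add_right_comm, add_assoc]
    rw [List.zipIdx_cons, List.map_cons, List.filter_cons, List.filter_cons, ha, Nat.add_zero,
      htail, ← ih hl.2 (n + 1)]
    split <;> simp_all

lemma dFace_eq_filter (A : Finset ℕ) (x : Finset V) :
    dFace A x = x.filter (fun v => vertexPos x v ∉ A) := by
  have hpos : ∀ v, (x.sort (· ≤ ·)).countP (· < v) = vertexPos x v := fun v => by
    rw [← Multiset.coe_countP, Finset.sort_eq, Multiset.countP_eq_card_filter]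
    rfl
  rw [dFace, zipIdx_filter_map_snd _ (List.sortedLT_iff_pairwise.1 (sortedLT_sort x)) 0
    (fun m => decide (m ∉ A))]
  simp [hpos, List.toFinset_filter, sort_toFinset]

@[simp] lemma mem_dFace {v : V} : v ∈ dFace A x ↔ v ∈ x ∧ vertexPos x v ∉ A := by
  rw [dFace_eq_filter, mem_filter]

lemma dFace_subset : dFace A x ⊆ x := fun _ hv => (mem_dFace.1 hv).1

lemma dFace_eq_empty (hA : range #x ⊆ A) : dFace A x = ∅ :=
  eq_empty_of_forall_notMem fun _ hv =>
    (mem_dFace.1 hv).2 (hA (mem_range.2 (vertexPos_lt_card (mem_dFace.1 hv).1)))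

lemma image_vertexPos_dFace : (dFace A x).image (vertexPos x) = range #x \ A := by
  rw [dFace_eq_filter, ← filter_image (p := (· ∉ A)), image_vertexPos, sdiff_eq_filter]

lemma card_dFace : #(dFace A x) = #(range #x \ A) := by
  rw [← image_vertexPos_dFace,
    card_image_of_injOn (vertexPos_strictMonoOn.injOn.mono (coe_subset.2 dFace_subset))]

lemma vertexPos_dFace {v : V} (hv : v ∈ x) :
    vertexPos (dFace A x) v = vertexPos (range #x \ A) (vertexPos x v) := by
  rw [vertexPos_of_subset dFace_subset hv, image_vertexPos_dFace]

lemma dFace_vertexPos_dFace {r : ℕ} (hr : r ∈ range #x \ A) :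
    dFace {vertexPos (range #x \ A) r} (dFace A x) = dFace (insert r A) x := by
  ext v
  simp only [mem_dFace, mem_singleton, mem_insert, not_or]
  constructor
  · rintro ⟨⟨hv, hvA⟩, hvr⟩
    rw [vertexPos_dFace hv] at hvr
    exact ⟨hv, fun h => hvr (by rw [h]), hvA⟩
  · rintro ⟨hv, hvr, hvA⟩
    refine ⟨⟨hv, hvA⟩, ?_⟩
    rw [vertexPos_dFace hv]
    intro h
    exact hvr (vertexPos_strictMonoOn.injOn
      (by simp [vertexPos_lt_card hv, hvA]) hr h)

end Faces

section SuccAbove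

def succAboveEmb (k : ℕ) : ℕ ↪ ℕ :=
  ⟨fun a => if a < k then a else a + 1, fun a b => by dsimp only; split_ifs <;> omega⟩

lemma succAboveEmb_apply (k a : ℕ) : succAboveEmb k a = if a < k then a else a + 1 := rfl

lemma succAboveEmb_ne (k a : ℕ) : succAboveEmb k a ≠ k := by
  rw [succAboveEmb_apply]; split_ifs <;> omega

lemma map_succAboveEmb_range {k n : ℕ} (hk : k < n) :
    (range (n - 1)).map (succAboveEmb k) = (range n).erase k := by
  ext b
  simp only [mem_map, mem_range, mem_erase, succAboveEmb_apply]
  constructor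
  · rintro ⟨a, ha, rfl⟩
    split_ifs <;> omega
  · intro hb
    refine ⟨if b < k then b else b - 1, by split_ifs <;> omega, ?_⟩
    split_ifs <;> omega

lemma succAboveEmb_vertexPos {k m n : ℕ} (hm : m < n) (hmk : m ≠ k) :
    succAboveEmb k (vertexPos (range n \ {k}) m) = m := by
  have h : (range n \ {k}).filter (· < m) = (range m).erase k := by
    ext a; simp only [mem_filter, mem_sdiff, mem_range, mem_singleton, mem_erase]; omega
  rw [vertexPos, h, succAboveEmb_apply]
  rcases lt_or_gt_of_ne hmk with hlt | hgt
  · rw [erase_eq_of_notMem (by simp; omega), card_range, if_pos hlt]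
  · rw [card_erase_of_mem (by simp; omega), card_range, if_neg (by omega)]
    omega

lemma dFace_dFace_singleton (x : Finset V) (k : ℕ) (B : Finset ℕ) :
    dFace B (dFace {k} x) = dFace (insert k (B.map (succAboveEmb k))) x := by
  ext v
  simp only [mem_dFace, mem_singleton, mem_insert, not_or, and_assoc]
  refine and_congr_right fun hv => and_congr_right fun hvk => not_congr ?_
  rw [vertexPos_dFace hv, ← mem_map' (succAboveEmb k),
    succAboveEmb_vertexPos (vertexPos_lt_card hv) hvk]

lemma succAboveEmb_le_iff {k a b : ℕ} : succAboveEmb k a ≤ succAboveEmb k b ↔ a ≤ b := by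
  simp only [succAboveEmb_apply]; split_ifs <;> omega

/-- Inserting `k` raises every later element and its rank by one, so parities are unchanged. -/
lemma idxFun_insert_map_succAboveEmb (k : ℕ) (U : Finset ℕ) (a : ℕ) :
    idxFun (insert k (U.map (succAboveEmb k))) (succAboveEmb k a) = idxFun U a := by
  have hmap : (U.map (succAboveEmb k)).filter (· ≤ succAboveEmb k a) =
      (U.filter (· ≤ a)).map (succAboveEmb k) := by
    rw [filter_map]; exact congrArg _ (filter_congr fun _ _ => succAboveEmb_le_iff)
  rw [idxFun, idxFun, posIn, posIn, filter_insert, apply_ite card, hmap,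
    card_insert_of_notMem (by simp [succAboveEmb_ne]), card_map, succAboveEmb_apply]
  split_ifs <;> omega

lemma insert_filter_idxFun_insert_map (p : ℕ → Prop) [DecidablePred p] (k : ℕ)
    (U : Finset ℕ) :
    insert k ((insert k (U.map (succAboveEmb k))).filter
        fun u => p (idxFun (insert k (U.map (succAboveEmb k))) u)) =
      insert k ((U.filter fun u => p (idxFun U u)).map (succAboveEmb k)) := by
  ext b
  simp only [mem_insert, mem_filter, mem_map]
  constructor
  · rintro (rfl | ⟨rfl | ⟨a, ha, rfl⟩, hp⟩)
    · exact .inl rfl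
    · exact .inl rfl
    · rw [idxFun_insert_map_succAboveEmb] at hp
      exact .inr ⟨a, ⟨ha, hp⟩, rfl⟩
  · rintro (rfl | ⟨a, ⟨ha, hp⟩, rfl⟩)
    · exact .inl rfl
    · exact .inr ⟨.inr ⟨a, ha, rfl⟩, by rwa [idxFun_insert_map_succAboveEmb]⟩

end SuccAbove

section Parity

variable {U W : Finset ℕ} {u v t n : ℕ}

lemma idxFun_lt_two (U : Finset ℕ) (u : ℕ) : idxFun U u < 2 := Nat.mod_lt _ two_pos

lemma part0_subset (U : Finset ℕ) : part0 U ⊆ U := filter_subset _ _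

lemma part1_eq_sdiff (U : Finset ℕ) : part1 U = U \ part0 U := by
  ext u
  simp only [part0, part1, mem_sdiff, mem_filter, not_and]
  have := idxFun_lt_two U u
  constructor
  · rintro ⟨hu, h⟩
    exact ⟨hu, fun _ => by omega⟩
  · rintro ⟨hu, h⟩
    exact ⟨hu, by have := h hu; omega⟩

lemma part1_subset (U : Finset ℕ) : part1 U ⊆ U := by
  rw [part1_eq_sdiff]; exact sdiff_subset

lemma disjoint_part0_part1 (U : Finset ℕ) : Disjoint (part0 U) (part1 U) := by
  rw [part1_eq_sdiff]; exact disjoint_sdiff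

lemma part0_union_part1 (U : Finset ℕ) : part0 U ∪ part1 U = U := by
  rw [part1_eq_sdiff]; exact union_sdiff_of_subset (part0_subset U)

/-- Erasing `v` lowers the rank of every later element by one, which flips its parity. -/
lemma idxFun_erase_eq_zero_iff (hv : v ∈ W) :
    idxFun (W.erase v) u = 0 ↔ (u < v ↔ idxFun W u = 0) := by
  have hpos : posIn (W.erase v) u + (if v ≤ u then 1 else 0) = posIn W u := by
    rw [posIn, posIn, filter_erase]
    split_ifs with h
    · exact card_erase_add_one (mem_filter.2 ⟨hv, h⟩)
    · rw [erase_eq_of_notMem (s := W.filter (· ≤ u)) fun hm => h (mem_filter.1 hm).2, add_zero]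
  unfold idxFun
  split_ifs at hpos <;> omega

lemma part0_erase (hv : v ∈ W) :
    part0 (W.erase v) = (W.erase v).filter (fun u => u < v ↔ idxFun W u = 0) :=
  filter_congr fun _ _ => idxFun_erase_eq_zero_iff hv

lemma sdiff_part1 (W : Finset ℕ) : W \ part1 W = part0 W := by
  rw [part1_eq_sdiff, Finset.sdiff_sdiff_eq_self (part0_subset W)]

lemma sdiff_insert_part0_erase : W \ insert v (part0 (W.erase v)) = part1 (W.erase v) := by
  rw [part1_eq_sdiff, sdiff_insert, erase_sdiff_comm]

lemma sdiff_part0_erase (hv : v ∈ W) : W \ part0 (W.erase v) = insert v (part1 (W.erase v)) := by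
  rw [part1_eq_sdiff, ← insert_sdiff_of_notMem _ fun h => notMem_erase v W (part0_subset _ h),
    insert_erase hv]

lemma insert_part0_insert_map (k : ℕ) (U : Finset ℕ) :
    insert k (part0 (insert k (U.map (succAboveEmb k)))) =
      insert k ((part0 U).map (succAboveEmb k)) :=
  insert_filter_idxFun_insert_map (· = 0) k U

lemma insert_part1_insert_map (k : ℕ) (U : Finset ℕ) :
    insert k (part1 (insert k (U.map (succAboveEmb k)))) =
      insert k ((part1 U).map (succAboveEmb k)) :=
  insert_filter_idxFun_insert_map (· = 1) k U

lemma part1_range (m : ℕ) : part1 (range m) = range m :=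
  filter_true_of_mem fun u hu => by
    have h : (range m).filter (· ≤ u) = range (u + 1) := by
      ext a; simp only [mem_filter, mem_range]; have := mem_range.1 hu; omega
    rw [idxFun, posIn, h, card_range]
    omega

lemma part0_range (m : ℕ) : part0 (range m) = ∅ := by
  have h := disjoint_part0_part1 (range m)
  rw [part1_range] at h
  exact subset_empty.1 fun u hu => (disjoint_left.1 h hu (part0_subset _ hu)).elim

lemma part0_range_erase_zero (n : ℕ) : part0 ((range n).erase 0) = (range n).erase 0 :=
  filter_true_of_mem fun u hu => by
    have h : ((range n).erase 0).filter (· ≤ u) = (range (u + 1)).erase 0 := by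
      have := mem_range.1 (mem_of_mem_erase hu)
      ext a; simp only [mem_filter, mem_erase, mem_range]; omega
    rw [idxFun, posIn, h, card_erase_of_mem (by simp), card_range]
    omega

lemma eq_range_erase_zero_of_part0_eq (hU : U ⊆ range n) (hcard : #U + 1 = n)
    (h : part0 U = U) : U = (range n).erase 0 := by
  refine eq_of_subset_of_card_le (fun u hu => mem_erase.2 ⟨?_, hU hu⟩) ?_
  · rintro rfl
    have h0 := (mem_filter.1 (h.symm ▸ hu : 0 ∈ part0 U)).2
    have hpos : posIn U 0 = 1 := by
      rw [posIn, card_eq_one]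
      exact ⟨0, eq_singleton_iff_unique_mem.2 ⟨mem_filter.2 ⟨hu, le_rfl⟩,
        fun a ha => Nat.le_zero.1 (mem_filter.1 ha).2⟩⟩
    rw [idxFun, hpos] at h0
    omega
  · rw [card_erase_of_mem (by simp; omega), card_range]
    omega

lemma eq_range_of_part1_eq (hU : U ⊆ range n) (hcard : #U + 1 = n)
    (h : part1 U = U) : U = range (n - 1) := by
  refine eq_of_subset_of_card_le (fun u hu => mem_range.2 ?_) (by rw [card_range]; omega)
  have hlt := mem_range.1 (hU hu)
  refine lt_of_le_of_ne (by omega) fun hu' => ?_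
  subst hu'
  have hpos : posIn U (n - 1) = #U :=
    congrArg card (filter_true_of_mem fun a ha => by have := mem_range.1 (hU ha); omega)
  have h1 := (mem_filter.1 (h.symm ▸ hu : n - 1 ∈ part1 U)).2
  rw [idxFun, hpos] at h1
  omega

def partCut (W : Finset ℕ) (t : ℕ) : Finset ℕ := W.filter (fun u => u < t ↔ idxFun W u = 0)

lemma partCut_zero (W : Finset ℕ) : partCut W 0 = part1 W :=
  filter_congr fun u _ => by
    have := idxFun_lt_two W u
    simp only [Nat.not_lt_zero, false_iff]
    omega

lemma partCut_of_subset_range (h : W ⊆ range t) : partCut W t = part0 W :=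
  filter_congr fun _ hu => by simp [mem_range.1 (h hu)]

lemma partCut_succ (ht : t ∉ W) : partCut W (t + 1) = partCut W t :=
  filter_congr fun u hu => by
    have : u ≠ t := fun h => ht (h ▸ hu)
    rw [show u < t + 1 ↔ u < t by omega]

lemma erase_partCut (hv : v ∈ W) (ht : t = v ∨ t = v + 1) :
    (partCut W t).erase v = part0 (W.erase v) := by
  rw [partCut, part0_erase hv, ← filter_erase]
  exact filter_congr fun u hu => by
    have := ne_of_mem_erase hu
    rw [show u < t ↔ u < v by omega]

lemma mem_partCut_succ_iff (hv : v ∈ W) : v ∈ partCut W (v + 1) ↔ v ∉ partCut W v := by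
  simp [partCut, hv]

end Parity

section Sums

variable {M : Type*} [AddCommGroup M] [Module (ZMod 2) M]

lemma sum_add_succ_of_subset_range (F : ℕ → M) {W : Finset ℕ} {N : ℕ} (hW : W ⊆ range N)
    (hF : ∀ t ∉ W, F (t + 1) = F t) : ∑ t ∈ W, (F t + F (t + 1)) = F 0 + F N := by
  rw [sum_subset hW fun t _ ht => by rw [hF t ht, ZModModule.add_self]]
  have h := sum_range_sub F N
  simp only [ZModModule.sub_eq_add] at h
  rw [add_comm (F 0), ← h]
  exact sum_congr rfl fun _ _ => add_comm _ _

/-- `partCut W v` and `partCut W (v + 1)` are `part0 (W.erase v)` and its `insert v`, in some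
order, and `partCut W t` only changes at `t ∈ W`, so the sum telescopes mod 2. -/
lemma sum_insert_part0_erase_add (G : Finset ℕ → M) (W : Finset ℕ) :
    ∑ v ∈ W, (G (insert v (part0 (W.erase v))) + G (part0 (W.erase v))) =
      G (part1 W) + G (part0 W) := by
  obtain ⟨N, hN⟩ := W.exists_nat_subset_range
  have hstep : ∀ v ∈ W, G (insert v (part0 (W.erase v))) + G (part0 (W.erase v)) =
      G (partCut W v) + G (partCut W (v + 1)) := by
    intro v hv
    have hlo := erase_partCut hv (.inl rfl)
    have hhi := erase_partCut hv (.inr rfl)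
    by_cases h : v ∈ partCut W v
    · have h' := (mem_partCut_succ_iff hv).not.2 (not_not.2 h)
      rw [← hlo, insert_erase h, hlo, ← hhi, erase_eq_of_notMem h']
    · have h' := (mem_partCut_succ_iff hv).2 h
      rw [← hhi, insert_erase h', hhi, ← hlo, erase_eq_of_notMem h, add_comm]
  rw [sum_congr rfl hstep, sum_add_succ_of_subset_range _ hN fun t ht => by rw [partCut_succ ht],
    partCut_zero, partCut_of_subset_range hN]

variable {α : Type*} [DecidableEq α]

lemma sum_sdiff_insert_add_sum_insert_insert (Φ : Finset α → Finset α → M)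
    {A B s : Finset α} (hAB : Disjoint A B) (hs : A ∪ B ⊆ s) :
    ∑ r ∈ s \ A, Φ (insert r A) B + ∑ r ∈ s \ B, Φ A (insert r B)
        + ∑ k ∈ A ∪ B, Φ (insert k A) (insert k B) =
      ∑ v ∈ s \ (A ∪ B), (Φ (insert v A) B + Φ A (insert v B)) := by
  have hsA : s \ A = s \ (A ∪ B) ∪ B := by
    ext r
    have := fun h : r ∈ B => disjoint_right.1 hAB h
    have := fun h : r ∈ B => hs (mem_union_right A h)
    simp only [mem_sdiff, mem_union]
    tauto
  have hsB : s \ B = s \ (A ∪ B) ∪ A := by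
    ext r
    have := fun h : r ∈ A => disjoint_left.1 hAB h
    have := fun h : r ∈ A => hs (mem_union_left B h)
    simp only [mem_sdiff, mem_union]
    tauto
  have hA : ∑ k ∈ A, Φ (insert k A) (insert k B) = ∑ k ∈ A, Φ A (insert k B) :=
    sum_congr rfl fun k hk => by rw [insert_eq_of_mem hk]
  have hB : ∑ k ∈ B, Φ (insert k A) (insert k B) = ∑ k ∈ B, Φ (insert k A) B :=
    sum_congr rfl fun k hk => by rw [insert_eq_of_mem hk]
  rw [hsA, hsB, sum_union (disjoint_sdiff_self_left.mono_right subset_union_right),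
    sum_union (disjoint_sdiff_self_left.mono_right subset_union_left), sum_union hAB, hA, hB,
    sum_add_distrib]
  set a := ∑ v ∈ s \ (A ∪ B), Φ (insert v A) B
  set b := ∑ k ∈ B, Φ (insert k A) B
  set c := ∑ v ∈ s \ (A ∪ B), Φ A (insert v B)
  set d := ∑ k ∈ A, Φ A (insert k B)
  calc a + b + (c + d) + (d + b) = a + c + (b + b) + (d + d) := by abel
    _ = a + c := by rw [ZModModule.add_self, ZModModule.add_self, add_zero, add_zero]

end Sums

section Reindex

variable {α M : Type*} [DecidableEq α] [AddCommMonoid M]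

lemma sum_powersetCard_erase_insert {s : Finset α} {v : α} (hv : v ∈ s) (c : ℕ)
    (f : Finset α → M) :
    ∑ U ∈ powersetCard c (s.erase v), f (insert v U) =
      ∑ W ∈ (powersetCard (c + 1) s).filter (v ∈ ·), f W := by
  have hnot : ∀ U ∈ powersetCard c (s.erase v), v ∉ U := fun U hU h =>
    notMem_erase v s ((mem_powersetCard.1 hU).1 h)
  rw [← sum_image fun U hU U' hU' h => by
    rw [← erase_insert (hnot U hU), h, erase_insert (hnot U' hU')]]
  congr 1
  conv_rhs => rw [← insert_erase hv, powersetCard_succ_insert (notMem_erase v s), filter_union,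
    filter_false_of_mem fun W hW => notMem_mono (mem_powersetCard.1 hW).1 (notMem_erase v s),
    filter_true_of_mem fun W hW => by
      obtain ⟨U, -, rfl⟩ := mem_image.1 hW
      exact mem_insert_self v U, empty_union]

lemma sum_powersetCard_sum_mem (s : Finset α) (c : ℕ) (F : Finset α → α → M) :
    ∑ W ∈ powersetCard (c + 1) s, ∑ v ∈ W, F W v =
      ∑ v ∈ s, ∑ U ∈ powersetCard c (s.erase v), F (insert v U) v := by
  rw [sum_comm' (t' := s) (s' := fun v => (powersetCard (c + 1) s).filter (v ∈ ·))]
  · exact sum_congr rfl fun v hv => (sum_powersetCard_erase_insert hv c (F · v)).symm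
  · intro W v
    simp only [mem_filter, mem_powersetCard]
    exact ⟨fun h => ⟨⟨h.1, h.2⟩, h.1.1 h.2⟩, fun h => ⟨h.1.1, h.1.2⟩⟩

lemma sum_powersetCard_sum_sdiff (s : Finset α) (c : ℕ) (g : Finset α → α → M) :
    ∑ U ∈ powersetCard c s, ∑ v ∈ s \ U, g U v =
      ∑ W ∈ powersetCard (c + 1) s, ∑ v ∈ W, g (W.erase v) v := by
  rw [sum_powersetCard_sum_mem, sum_comm' (t' := s) (s' := fun v => powersetCard c (s.erase v))]
  · refine sum_congr rfl fun v _ => sum_congr rfl fun U hU => ?_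
    rw [erase_insert fun h => notMem_erase v s ((mem_powersetCard.1 hU).1 h)]
  · intro U v
    simp only [mem_powersetCard, mem_sdiff, subset_erase]
    tauto

end Reindex

section VertexSums

variable {M : Type*} [AddCommMonoid M] {c n : ℕ}

lemma sum_powersetCard_ite_part0 (f : Finset ℕ → M) (hc : c < n) :
    ∑ U ∈ powersetCard c (range n), (if #(part0 U) + 1 = n then f U else 0) =
      if c + 1 = n then f ((range n).erase 0) else 0 := by
  split_ifs with hcn
  · have hmem : (range n).erase 0 ∈ powersetCard c (range n) :=
      mem_powersetCard.2 ⟨erase_subset _ _, by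
        rw [card_erase_of_mem (by simp; omega), card_range]; omega⟩
    rw [sum_eq_single_of_mem _ hmem fun U hU hne => if_neg fun h => hne ?_, if_pos]
    · rw [part0_range_erase_zero, card_erase_of_mem (by simp; omega), card_range]; omega
    · obtain ⟨hsub, hcard⟩ := mem_powersetCard.1 hU
      exact eq_range_erase_zero_of_part0_eq hsub (by omega)
        (eq_of_subset_of_card_le (part0_subset U) (by omega))
  · exact sum_eq_zero fun U hU => if_neg fun h => hcn <| by
      have := card_le_card (part0_subset U); rw [(mem_powersetCard.1 hU).2] at this; omega

lemma sum_powersetCard_ite_part1 (f : Finset ℕ → M) (hc : c < n) :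
    ∑ U ∈ powersetCard c (range n), (if #(part1 U) + 1 = n then f U else 0) =
      if c + 1 = n then f (range (n - 1)) else 0 := by
  split_ifs with hcn
  · have hmem : range (n - 1) ∈ powersetCard c (range n) :=
      mem_powersetCard.2 ⟨range_subset_range.2 (Nat.sub_le n 1), by rw [card_range]; omega⟩
    rw [sum_eq_single_of_mem _ hmem fun U hU hne => if_neg fun h => hne ?_, if_pos]
    · rw [part1_range, card_range]; omega
    · obtain ⟨hsub, hcard⟩ := mem_powersetCard.1 hU
      exact eq_range_of_part1_eq hsub (by omega)
        (eq_of_subset_of_card_le (part1_subset U) (by omega))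
  · exact sum_eq_zero fun U hU => if_neg fun h => hcn <| by
      have := card_le_card (part1_subset U); rw [(mem_powersetCard.1 hU).2] at this; omega

end VertexSums

section Chains

lemma bdMap_eC (y : Finset V) : bdMap V (eC y) = bdSimplex y := by
  rw [bdMap, eC, Finsupp.lift_apply, Finsupp.sum_single_index (by simp), one_smul]

lemma bdMap_eC_eq_sum (y : Finset V) :
    bdMap V (eC y) = ∑ s ∈ range #y, eC (dFace {s} y) + if #y = 1 then eC ∅ else 0 := by
  rw [bdMap_eC, bdSimplex]
  rcases lt_or_ge #y 2 with hy | hy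
  · interval_cases h : #y
    · simp
    · rw [if_neg (by decide), if_pos rfl, sum_range_one,
        dFace_eq_empty (by rw [h]; exact subset_refl _), ZModModule.add_self]
  · rw [if_pos hy, if_neg (by omega), add_zero]

lemma deltaMap_eC (i : ℤ) (y : Finset V) : deltaMap V i (eC y) = deltaSimplex i y := by
  rw [deltaMap, eC, Finsupp.lift_apply, Finsupp.sum_single_index (by simp), one_smul]

variable (x : Finset V)

noncomputable def faceTmul (A B : Finset ℕ) : Chains V ⊗[ZMod 2] Chains V :=
  eC (dFace A x) ⊗ₜ eC (dFace B x)

noncomputable def cupSum (c : ℕ) : Chains V ⊗[ZMod 2] Chains V :=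
  ∑ U ∈ powersetCard c (range #x), faceTmul x (part0 U) (part1 U)

noncomputable def insertSum (A B : Finset ℕ) : Chains V ⊗[ZMod 2] Chains V :=
  ∑ r ∈ range #x \ A, faceTmul x (insert r A) B +
    ∑ r ∈ range #x \ B, faceTmul x A (insert r B)

/-- Correction to `insertSum` in `bdT_faceTmul`: the boundary of a vertex is `0`, not the empty
simplex `dFace (range #x) x`. -/
noncomputable def vertexTerm (A B : Finset ℕ) : Chains V ⊗[ZMod 2] Chains V :=
  (if #A + 1 = #x then faceTmul x (range #x) B else 0) +
    if #B + 1 = #x then faceTmul x A (range #x) else 0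

variable {x} {A : Finset ℕ} {c : ℕ}

lemma bdMap_eC_dFace (hA : A ⊆ range #x) :
    bdMap V (eC (dFace A x)) =
      ∑ r ∈ range #x \ A, eC (dFace (insert r A) x) + if #A + 1 = #x then eC ∅ else 0 := by
  have hcard : #(range #x \ A) = #x - #A := by rw [card_sdiff_of_subset hA, card_range]
  have hA' : #A ≤ #x := by simpa using card_le_card hA
  rw [bdMap_eC_eq_sum, card_dFace, ← image_vertexPos,
    sum_image vertexPos_strictMonoOn.injOn,
    sum_congr rfl fun r hr => by rw [dFace_vertexPos_dFace hr]]
  congr 2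
  exact propext (by omega)

lemma transp_faceTmul (A B : Finset ℕ) : transp V (faceTmul x A B) = faceTmul x B A := rfl

lemma deltaMap_eC_eq_cupSum {i : ℤ} (hi : 0 ≤ i) (h : i + c + 1 = #x) :
    deltaMap V i (eC x) = cupSum x c := by
  rw [deltaMap_eC, deltaSimplex, if_pos ⟨hi, by omega⟩, show #x - 1 - i.toNat = c by omega]
  rfl

lemma deltaMap_eC_eq_zero {i : ℤ} (h : i < 0 ∨ #x ≤ i) : deltaMap V i (eC x) = 0 := by
  rw [deltaMap_eC, deltaSimplex, if_neg (by omega)]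

lemma card_dFace_singleton {k : ℕ} (hk : k ∈ range #x) : #(dFace {k} x) = #x - 1 := by
  rw [card_dFace, card_sdiff_of_subset (singleton_subset_iff.2 hk), card_range, card_singleton]

lemma deltaMap_bdMap_eC_eq_zero {i : ℤ} (h : i < 0 ∨ #x ≤ i + 1) :
    deltaMap V i (bdMap V (eC x)) = 0 := by
  rw [bdMap_eC_eq_sum, map_add, map_sum,
    sum_eq_zero fun k hk => deltaMap_eC_eq_zero (by rw [card_dFace_singleton hk]; omega)]
  split_ifs
  · exact (zero_add _).trans (deltaMap_eC_eq_zero (by simp; omega))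
  · simp

lemma cupSum_card : cupSum x #x = faceTmul x ∅ (range #x) := by
  have h := powersetCard_self (range #x)
  rw [card_range] at h
  rw [cupSum, h, sum_singleton, part0_range, part1_range]

lemma cupSum_zero : cupSum x 0 = faceTmul x ∅ ∅ := by
  rw [cupSum, powersetCard_zero, sum_singleton]
  rfl

lemma bdT_faceTmul {A B : Finset ℕ} (hA : A ⊆ range #x) (hB : B ⊆ range #x) :
    bdT V (faceTmul x A B) = insertSum x A B + vertexTerm x A B := by
  rw [faceTmul, bdT, LinearMap.add_apply, TensorProduct.map_tmul, TensorProduct.map_tmul,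
    LinearMap.id_apply, LinearMap.id_apply, bdMap_eC_dFace hA, bdMap_eC_dFace hB,
    TensorProduct.add_tmul, TensorProduct.tmul_add, TensorProduct.sum_tmul,
    TensorProduct.tmul_sum]
  have hempty : dFace (range #x) x = ∅ := dFace_eq_empty subset_rfl
  simp only [insertSum, vertexTerm, faceTmul, hempty, apply_ite (· ⊗ₜ[ZMod 2] eC (dFace B x)),
    apply_ite (eC (dFace A x) ⊗ₜ[ZMod 2] ·), TensorProduct.zero_tmul, TensorProduct.tmul_zero]
  abel

lemma faceTmul_dFace_singleton (k : ℕ) (U : Finset ℕ) :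
    faceTmul (dFace {k} x) (part0 U) (part1 U) =
      faceTmul x (insert k (part0 (insert k (U.map (succAboveEmb k)))))
        (insert k (part1 (insert k (U.map (succAboveEmb k))))) := by
  rw [faceTmul, faceTmul, dFace_dFace_singleton, dFace_dFace_singleton, insert_part0_insert_map,
    insert_part1_insert_map]

lemma deltaMap_bdMap_eC {i : ℤ} (hi : 0 ≤ i) (h : i + c + 1 = #x) :
    deltaMap V i (bdMap V (eC x)) =
      ∑ U ∈ powersetCard c (range #x), ∑ k ∈ U,
        faceTmul x (insert k (part0 U)) (insert k (part1 U)) := by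
  have hvertex : deltaMap V i (if #x = 1 then eC ∅ else 0) = 0 := by
    split_ifs
    · exact deltaMap_eC_eq_zero (.inr (by simpa using hi))
    · exact map_zero _
  rw [bdMap_eC_eq_sum, map_add, map_sum, hvertex, add_zero]
  cases c with
  | zero =>
    rw [powersetCard_zero, sum_singleton, sum_empty]
    exact sum_eq_zero fun k hk =>
      deltaMap_eC_eq_zero (.inr (by rw [card_dFace_singleton hk]; omega))
  | succ c =>
    rw [sum_powersetCard_sum_mem]
    refine sum_congr rfl fun k hk => ?_
    rw [deltaMap_eC_eq_cupSum (c := c) hi (by rw [card_dFace_singleton hk]; omega), cupSum,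
      card_dFace_singleton hk, ← map_succAboveEmb_range (mem_range.1 hk), powersetCard_map,
      sum_map]
    exact sum_congr rfl fun U _ => faceTmul_dFace_singleton k U

lemma bdT_cupSum :
    bdT V (cupSum x c) =
      ∑ U ∈ powersetCard c (range #x), insertSum x (part0 U) (part1 U) +
        ∑ U ∈ powersetCard c (range #x), vertexTerm x (part0 U) (part1 U) := by
  rw [cupSum, map_sum, ← sum_add_distrib]
  exact sum_congr rfl fun U hU => bdT_faceTmul ((part0_subset U).trans (mem_powersetCard.1 hU).1)
    ((part1_subset U).trans (mem_powersetCard.1 hU).1)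

lemma sum_vertexTerm (hc : c < #x) :
    ∑ U ∈ powersetCard c (range #x), vertexTerm x (part0 U) (part1 U) =
      if c + 1 = #x then cupSum x #x + transp V (cupSum x #x) else 0 := by
  have h0 := sum_powersetCard_ite_part0 (fun U => faceTmul x (range #x) (part1 U)) hc
  have h1 := sum_powersetCard_ite_part1 (fun U => faceTmul x (part0 U) (range #x)) hc
  simp only [vertexTerm, sum_add_distrib, h0, h1]
  split_ifs
  · rw [cupSum_card, transp_faceTmul, part1_eq_sdiff, part0_range_erase_zero, Finset.sdiff_self,
      part0_range, add_comm]
  · exact add_zero 0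

lemma sum_insertSum_add_sum_insert :
    ∑ U ∈ powersetCard c (range #x), insertSum x (part0 U) (part1 U) +
        ∑ U ∈ powersetCard c (range #x), ∑ k ∈ U,
          faceTmul x (insert k (part0 U)) (insert k (part1 U)) =
      cupSum x (c + 1) + transp V (cupSum x (c + 1)) := by
  have hcancel : ∀ U ∈ powersetCard c (range #x),
      insertSum x (part0 U) (part1 U) +
          ∑ k ∈ U, faceTmul x (insert k (part0 U)) (insert k (part1 U)) =
        ∑ v ∈ range #x \ U,
          (faceTmul x (insert v (part0 U)) (part1 U) +
            faceTmul x (part0 U) (insert v (part1 U))) := by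
    intro U hU
    have h := sum_sdiff_insert_add_sum_insert_insert (faceTmul x) (disjoint_part0_part1 U)
      ((part0_union_part1 U).symm ▸ (mem_powersetCard.1 hU).1)
    rwa [part0_union_part1] at h
  have htelescope : ∀ W : Finset ℕ, ∑ v ∈ W,
      (faceTmul x (insert v (part0 (W.erase v))) (part1 (W.erase v)) +
        faceTmul x (part0 (W.erase v)) (insert v (part1 (W.erase v)))) =
      transp V (faceTmul x (part0 W) (part1 W)) + faceTmul x (part0 W) (part1 W) := by
    intro W
    have h := sum_insert_part0_erase_add (fun S => faceTmul x S (W \ S)) W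
    rw [sdiff_part1, ← part1_eq_sdiff] at h
    rw [transp_faceTmul, ← h]
    exact sum_congr rfl fun v hv => by rw [sdiff_insert_part0_erase, sdiff_part0_erase hv]
  rw [← sum_add_distrib, sum_congr rfl hcancel, sum_powersetCard_sum_sdiff,
    sum_congr rfl fun W _ => htelescope W, sum_add_distrib, cupSum, map_sum, add_comm]

lemma bdT_cupSum_add_deltaMap_bdMap {i : ℤ} (hi : 0 ≤ i) (h : i + c + 1 = #x) :
    bdT V (cupSum x c) + deltaMap V i (bdMap V (eC x)) =
      if c + 1 = #x then 0 else cupSum x (c + 1) + transp V (cupSum x (c + 1)) := by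
  rw [deltaMap_bdMap_eC hi h, bdT_cupSum, add_right_comm, sum_insertSum_add_sum_insert,
    sum_vertexTerm (by omega)]
  split_ifs with hc
  · rw [hc]
    exact ZModModule.add_self (G := Chains V ⊗[ZMod 2] Chains V) _
  · exact add_zero _

end Chains

/-- the homotopy relation
`∂(Δᵢ(x)) + Δᵢ(∂x) = (1 + T) Δ_{i-1}(x)` for every simplex `x` and integer `i`. -/
theorem stmt_11 {V : Type} [LinearOrder V] (i : ℤ) (x : Finset V) (hx : x.Nonempty) :
    bdT V (deltaMap V i (eC x)) + deltaMap V i (bdMap V (eC x)) =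
      deltaMap V (i - 1) (eC x) + transp V (deltaMap V (i - 1) (eC x)) := by
  rcases lt_or_ge i 0 with hi | hi
  · rw [deltaMap_eC_eq_zero (.inl hi), deltaMap_bdMap_eC_eq_zero (.inl hi),
      deltaMap_eC_eq_zero (.inl (by omega)), map_zero, map_zero]
  rcases lt_or_ge i #x with hix | hix
  · obtain ⟨c, hc⟩ : ∃ c : ℕ, i + c + 1 = #x := ⟨(#x - 1 - i).toNat, by omega⟩
    rw [deltaMap_eC_eq_cupSum hi hc, bdT_cupSum_add_deltaMap_bdMap hi hc]
    split_ifs with hcx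
    · rw [deltaMap_eC_eq_zero (.inl (by omega)), map_zero, add_zero]
    · rw [deltaMap_eC_eq_cupSum (c := c + 1) (by omega) (by push_cast; omega)]
  · have hcard := hx.card_pos
    rw [deltaMap_eC_eq_zero (.inr hix), deltaMap_bdMap_eC_eq_zero (.inr (by omega)), map_zero,
      zero_add]
    rcases eq_or_lt_of_le hix with hxi | hxi
    · rw [deltaMap_eC_eq_cupSum (c := 0) (by omega) (by omega), cupSum_zero, transp_faceTmul]
      exact (ZModModule.add_self (G := Chains V ⊗[ZMod 2] Chains V) _).symm
    · rw [deltaMap_eC_eq_zero (.inr (by omega)), map_zero, add_zero]
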